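/- The equal opportunity control is continuous: for each finite product set X, the correspondence (μ, f) ↦ {d ∈ [0,1]^{I×X} : TP(w,d,μ,f) = TP(b,d,μ,f)} on Δ°(I×X) × (0,1)^{I×X} is nonempty- and compact-valued, upper hemicontinuous, and lower hemicontinuous. Consequently, the equal opportunity control is not fragile. -/

import Mathlib

/-!
Formalization of the Coate–Loury statistical discrimination model with
machine-learning (contractible) beliefs, following Zhu,
"The Impact of Equal Opportunity on Statistical Discrimination".
-/

open scoped BigOperators
open MeasureTheory

noncomputable section

attribute [local instance] Classical.propDecidable

/-- Group identities `I = {w, b}`. -/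
inductive GrpI
  | w
  | b
deriving DecidableEq

instance : Fintype GrpI :=
  Fintype.ofList [GrpI.w, GrpI.b] (by intro x; cases x <;> simp)

/-- Classes `Y = {q, u}` (qualified / unqualified). -/
inductive Cls
  | q
  | u
deriving DecidableEq

instance : Fintype Cls :=
  Fintype.ofList [Cls.q, Cls.u] (by intro x; cases x <;> simp)

/-- A game `(X, λ_w, p, G, v_q, v_u, ω)` of the Coate–Loury model.  The set of
other features is the finite product `X = X_1 × ⋯ × X_N`, encoded as the pi type
`(j : Fin N) → Xs j`.  The statistical model (Assumption 1) is encoded through a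
nonempty subset `Ysub ⊆ {1, …, N}` together with the factorization
`p(x | i, y) = pY(x_𝒴 | y) · pC(x_{-𝒴} | i, x_𝒴)`.  The cost distribution is
given by an everywhere positive density `g` with `∫ g = 1` and `∫ |c| g(c) dc < ∞`. -/
structure Game (N : ℕ) (Xs : Fin N → Type) [∀ j, Fintype (Xs j)]
    [∀ j, Nonempty (Xs j)] where
  lamw : ℝ
  lamw_pos : 0 < lamw
  lamw_lt_one : lamw < 1
  Ysub : Finset (Fin N)
  Ysub_nonempty : Ysub.Nonempty
  pY : ((j : Ysub) → Xs j.1) → Cls → ℝ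
  pC : GrpI → ((j : Fin N) → Xs j) → ℝ
  pY_pos : ∀ xY y, 0 < pY xY y
  pC_pos : ∀ i x, 0 < pC i x
  pY_sum : ∀ y, ∑ xY, pY xY y = 1
  pC_sum : ∀ (i : GrpI) (xY : (j : Ysub) → Xs j.1),
    ∑ x ∈ Finset.univ.filter
        (fun x : (j : Fin N) → Xs j => (fun j : Ysub => x j.1) = xY),
      pC i x = 1
  g : ℝ → ℝ
  g_pos : ∀ c, 0 < g c
  g_int : Integrable g
  g_norm : (∫ c, g c) = 1
  g_abs_int : Integrable fun c => |c| * g c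
  vq : ℝ
  vu : ℝ
  om : ℝ
  vq_pos : 0 < vq
  vu_pos : 0 < vu
  om_pos : 0 < om

section Policies

variable {N : ℕ} {Xs : Fin N → Type}

/-- A decision policy `d : I × X → [0,1]`. -/
def IsPolicy (d : GrpI → ((j : Fin N) → Xs j) → ℝ) : Prop :=
  ∀ i x, d i x ∈ Set.Icc (0 : ℝ) 1

/-- A decision policy when data is color-blind, `d_cb : X → [0,1]`. -/
def IsCbPolicy (dcb : ((j : Fin N) → Xs j) → ℝ) : Prop :=
  ∀ x, dcb x ∈ Set.Icc (0 : ℝ) 1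

/-- `S ⊆ {1, …, N}` has the dependence property for the belief `f`:
`f` depends on `(i, x)` only up to `(i, x_S)`. -/
def DepProp {I : Type} (f : I → ((j : Fin N) → Xs j) → ℝ)
    (S : Finset (Fin N)) : Prop :=
  ∀ (i : I) (x x' : (j : Fin N) → Xs j), (∀ j ∈ S, x j = x' j) → f i x = f i x'

/-- The minimal subset `Ŷ(f)` with the dependence property. -/
def minDep {I : Type} (f : I → ((j : Fin N) → Xs j) → ℝ) : Finset (Fin N) :=
  Finset.univ.filter fun j => ∀ S : Finset (Fin N), DepProp f S → j ∈ S

variable [∀ j, Fintype (Xs j)]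

/-- Full-support probability distributions on `I × X` (the set `Δ°(I × X)`). -/
def FullSupp (μ : GrpI → ((j : Fin N) → Xs j) → ℝ) : Prop :=
  (∀ i x, 0 < μ i x) ∧ ∑ i, ∑ x, μ i x = 1

/-- Beliefs valued in `(0, 1)`. -/
def OpenBelief (f : GrpI → ((j : Fin N) → Xs j) → ℝ) : Prop :=
  ∀ i x, f i x ∈ Set.Ioo (0 : ℝ) 1

/-- Acceptance rate of group `i`. -/
def AR (i : GrpI) (d μ : GrpI → ((j : Fin N) → Xs j) → ℝ) : ℝ :=
  (∑ x, d i x * μ i x) / ∑ x, μ i x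

/-- True positive rate of group `i`. -/
def TP (i : GrpI) (d μ f : GrpI → ((j : Fin N) → Xs j) → ℝ) : ℝ :=
  (∑ x, d i x * μ i x * f i x) / ∑ x, μ i x * f i x

/-- The equal opportunity control `k(X, μ, f)`. -/
def EOset (μ f : GrpI → ((j : Fin N) → Xs j) → ℝ) :
    Set (GrpI → ((j : Fin N) → Xs j) → ℝ) :=
  {d | IsPolicy d ∧ TP GrpI.w d μ f = TP GrpI.b d μ f}

/-- The color-blind control: all color-blind decision policies. -/
def CBset : Set (GrpI → ((j : Fin N) → Xs j) → ℝ) :=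
  {d | IsPolicy d ∧ ∀ x, d GrpI.w x = d GrpI.b x}

/-- The no proxies control: policies depending on `(i,x)` only through `x_{Ŷ(f)}`. -/
def NoProxies (_μ f : GrpI → ((j : Fin N) → Xs j) → ℝ) :
    Set (GrpI → ((j : Fin N) → Xs j) → ℝ) :=
  {d | IsPolicy d ∧
    ∀ i i' x x', (∀ j ∈ minDep f, x j = x' j) → d i x = d i' x'}

/-- `ℓ²` distance between decision policies. -/
def polDist (d d' : GrpI → ((j : Fin N) → Xs j) → ℝ) : ℝ :=
  Real.sqrt (∑ i, ∑ x, (d i x - d' i x) ^ 2)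

/-- `ℓ²` distance between pairs `(μ, f)`. -/
def pairDist (μ f μ' f' : GrpI → ((j : Fin N) → Xs j) → ℝ) : ℝ :=
  Real.sqrt ((∑ i, ∑ x, (μ i x - μ' i x) ^ 2) + ∑ i, ∑ x, (f i x - f' i x) ^ 2)

/-- `ℓ²` distance between strategy profiles `(c̄, d)`. -/
def profDist (c : GrpI → ℝ) (d : GrpI → ((j : Fin N) → Xs j) → ℝ)
    (c' : GrpI → ℝ) (d' : GrpI → ((j : Fin N) → Xs j) → ℝ) : ℝ :=
  Real.sqrt ((∑ i, (c i - c' i) ^ 2) + ∑ i, ∑ x, (d i x - d' i x) ^ 2)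

end Policies

/-- Upper hemicontinuity of a correspondence on a set. -/
def UpperHemicontinuousOn' {α β : Type*} [TopologicalSpace α] [TopologicalSpace β]
    (F : α → Set β) (S : Set α) : Prop :=
  ∀ a ∈ S, ∀ V : Set β, IsOpen V → F a ⊆ V → ∀ᶠ a' in nhdsWithin a S, F a' ⊆ V

/-- Lower hemicontinuity of a correspondence on a set. -/
def LowerHemicontinuousOn' {α β : Type*} [TopologicalSpace α] [TopologicalSpace β]
    (F : α → Set β) (S : Set α) : Prop :=
  ∀ a ∈ S, ∀ V : Set β, IsOpen V → (F a ∩ V).Nonempty →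
    ∀ᶠ a' in nhdsWithin a S, (F a' ∩ V).Nonempty

namespace Game

variable {N : ℕ} {Xs : Fin N → Type} [∀ j, Fintype (Xs j)] [∀ j, Nonempty (Xs j)]
variable (Γ : Game N Xs)

/-- Projection `x ↦ x_𝒴`. -/
def proj (x : (j : Fin N) → Xs j) : (j : Γ.Ysub) → Xs j.1 := fun j => x j.1

/-- `p(x | i, y) = p(x_𝒴 | y) · p(x_{-𝒴} | i, x_𝒴)`. -/
def p (i : GrpI) (x : (j : Fin N) → Xs j) (y : Cls) : ℝ :=
  Γ.pY (Γ.proj x) y * Γ.pC i x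

/-- Group probabilities `λ_w`, `λ_b = 1 - λ_w`. -/
def lam : GrpI → ℝ := fun i =>
  match i with
  | GrpI.w => Γ.lamw
  | GrpI.b => 1 - Γ.lamw

/-- The CDF `G` of the cost distribution. -/
def G (c : ℝ) : ℝ := ∫ t in Set.Iic c, Γ.g t

/-- The likelihood function `l(x) = p(x_𝒴 | q) / p(x_𝒴 | u)`. -/
def lhd (x : (j : Fin N) → Xs j) : ℝ :=
  Γ.pY (Γ.proj x) Cls.q / Γ.pY (Γ.proj x) Cls.u

/-- The likelihood function on `X_𝒴`. -/
def lhdY (xY : (j : Γ.Ysub) → Xs j.1) : ℝ := Γ.pY xY Cls.q / Γ.pY xY Cls.u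

/-- The set of likelihood values `{l_1 < … < l_n}`. -/
def LVset : Set ℝ := Set.range Γ.lhd

/-- The assumption that `1` is not a likelihood value
(equivalently, `WW` is single-peaked). -/
def OneNotLV : Prop := (1 : ℝ) ∉ Γ.LVset

/-- The largest likelihood value `l_n`. -/
def lmax : ℝ := sSup Γ.LVset

/-- `⌈ℓ⌉`: the smallest likelihood value `≥ ℓ`. -/
def lceil (ℓ : ℝ) : ℝ := sInf {v | v ∈ Γ.LVset ∧ ℓ ≤ v}

/-- `⌈ℓ⌉⁻`: the next smallest likelihood value below `⌈ℓ⌉` (or `l_0 = 0`). -/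
def lceilm (ℓ : ℝ) : ℝ := sSup (insert 0 {v | v ∈ Γ.LVset ∧ v < Γ.lceil ℓ})

/-- The smallest likelihood value `> ℓ`. -/
def lnext (ℓ : ℝ) : ℝ := sInf {v | v ∈ Γ.LVset ∧ ℓ < v}

/-- The true distribution of features `μ_RE` given cost thresholds `c̄`. -/
def muRE (c : GrpI → ℝ) (i : GrpI) (x : (j : Fin N) → Xs j) : ℝ :=
  Γ.lam i * (Γ.G (c i) * Γ.p i x Cls.q + (1 - Γ.G (c i)) * Γ.p i x Cls.u)

/-- The true conditional probability (calibrated belief) `f_RE` given `c̄`. -/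
def fRE (c : GrpI → ℝ) (i : GrpI) (x : (j : Fin N) → Xs j) : ℝ :=
  Γ.G (c i) * Γ.p i x Cls.q /
    (Γ.G (c i) * Γ.p i x Cls.q + (1 - Γ.G (c i)) * Γ.p i x Cls.u)

/-- Utility `U_i(c̄(i), d(i))` of the representative `i`-applicant. -/
def Uapp (i : GrpI) (ci : ℝ) (di : ((j : Fin N) → Xs j) → ℝ) : ℝ :=
  Γ.om * ∑ x, (Γ.G ci * Γ.p i x Cls.q + (1 - Γ.G ci) * Γ.p i x Cls.u) * di x -
    ∫ t in Set.Iic ci, t * Γ.g t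

/-- Firm utility `U_F(d, μ, f)`. -/
def UF (d μ f : GrpI → ((j : Fin N) → Xs j) → ℝ) : ℝ :=
  ∑ i, ∑ x, d i x * μ i x * (f i x * Γ.vq - (1 - f i x) * Γ.vu)

/-- The color-blind true distribution of features `μ_cb,RE`. -/
def mucbRE (c : GrpI → ℝ) (x : (j : Fin N) → Xs j) : ℝ :=
  Γ.muRE c GrpI.w x + Γ.muRE c GrpI.b x

/-- The color-blind true conditional probability `f_cb,RE`. -/
def fcbRE (c : GrpI → ℝ) (x : (j : Fin N) → Xs j) : ℝ :=
  (Γ.muRE c GrpI.w x * Γ.fRE c GrpI.w x + Γ.muRE c GrpI.b x * Γ.fRE c GrpI.b x) /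
    Γ.mucbRE c x

/-- Firm utility when data is color-blind. -/
def UFcb (dcb μcb fcb : ((j : Fin N) → Xs j) → ℝ) : ℝ :=
  ∑ x, dcb x * μcb x * (fcb x * Γ.vq - (1 - fcb x) * Γ.vu)

/-- `d(i | l_m)`: conditional acceptance probability at likelihood value `lv`. -/
def dcond (i : GrpI) (di : ((j : Fin N) → Xs j) → ℝ) (lv : ℝ) : ℝ :=
  (∑ x ∈ Finset.univ.filter (fun x => Γ.lhd x = lv), Γ.p i x Cls.q * di x) /
    ∑ x ∈ Finset.univ.filter (fun x => Γ.lhd x = lv), Γ.p i x Cls.q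

/-- The within-group policy `d(i)` is associated with the likelihood mixture `ℓ`. -/
def AssociatedWith (i : GrpI) (di : ((j : Fin N) → Xs j) → ℝ) (ℓ : ℝ) : Prop :=
  0 ≤ ℓ ∧ ℓ ≤ Γ.lmax ∧
    ∀ lv ∈ Γ.LVset,
      (Γ.lceil ℓ < lv → Γ.dcond i di lv = 1) ∧
      (lv = Γ.lceil ℓ →
        Γ.dcond i di lv = (Γ.lceil ℓ - ℓ) / (Γ.lceil ℓ - Γ.lceilm ℓ)) ∧
      (lv < Γ.lceil ℓ → Γ.dcond i di lv = 0)

/-- A decision policy is fair if both within-group policies are associated with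
the same likelihood mixture. -/
def Fair (d : GrpI → ((j : Fin N) → Xs j) → ℝ) : Prop :=
  ∃ ℓ, Γ.AssociatedWith GrpI.w (d GrpI.w) ℓ ∧ Γ.AssociatedWith GrpI.b (d GrpI.b) ℓ

/-- `WW(l_m) = ω ∑_{x_𝒴 : l(x_𝒴) > l_m} (p(x_𝒴|q) - p(x_𝒴|u))`. -/
def WWval (t : ℝ) : ℝ :=
  Γ.om * ∑ xY ∈ Finset.univ.filter (fun xY => t < Γ.lhdY xY),
    (Γ.pY xY Cls.q - Γ.pY xY Cls.u)

/-- The piecewise-linear function `WW` interpolating the points `(l_m, WW(l_m))`. -/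
def WW (ℓ : ℝ) : ℝ :=
  if Γ.lceil ℓ = Γ.lceilm ℓ then Γ.WWval (Γ.lceil ℓ)
  else
    (Γ.WWval (Γ.lceilm ℓ) * (Γ.lceil ℓ - ℓ) +
        Γ.WWval (Γ.lceil ℓ) * (ℓ - Γ.lceilm ℓ)) /
      (Γ.lceil ℓ - Γ.lceilm ℓ)

/-- `EĒ(l_m)`: the unique cost with `G(EĒ(l_m)) = 1 / ((v_q/v_u) l_m + 1)`. -/
def EEbar (lv : ℝ) : ℝ := sInf {cc | 1 / (Γ.vq / Γ.vu * lv + 1) ≤ Γ.G cc}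

/-- The correspondence `EE : [0, l_n] ⇒ ℝ`. -/
def EE (ℓ : ℝ) : Set ℝ :=
  if ℓ = 0 then Set.Ici (Γ.EEbar (Γ.lceil 0))
  else if ℓ = Γ.lmax then Set.Iic (Γ.EEbar Γ.lmax)
  else if ℓ ∈ Γ.LVset then Set.Icc (Γ.EEbar (Γ.lnext ℓ)) (Γ.EEbar ℓ)
  else {Γ.EEbar (Γ.lceil ℓ)}

/-- Each representative applicant's cost threshold is a best response to `d`. -/
def BestResponds (c : GrpI → ℝ) (d : GrpI → ((j : Fin N) → Xs j) → ℝ) : Prop :=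
  ∀ (i : GrpI) (c' : ℝ), Γ.Uapp i c' (d i) ≤ Γ.Uapp i (c i) (d i)

/-- An (un-controlled) equilibrium. -/
def IsEquilibrium (c : GrpI → ℝ) (d : GrpI → ((j : Fin N) → Xs j) → ℝ) : Prop :=
  IsPolicy d ∧ Γ.BestResponds c d ∧
    ∀ d', IsPolicy d' →
      Γ.UF d' (Γ.muRE c) (Γ.fRE c) ≤ Γ.UF d (Γ.muRE c) (Γ.fRE c)

/-- A `k`-controlled equilibrium, for the control `(μ, f) ↦ K μ f`. -/
def IsControlledEq
    (K : (GrpI → ((j : Fin N) → Xs j) → ℝ) → (GrpI → ((j : Fin N) → Xs j) → ℝ) →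
      Set (GrpI → ((j : Fin N) → Xs j) → ℝ))
    (c : GrpI → ℝ) (d : GrpI → ((j : Fin N) → Xs j) → ℝ) : Prop :=
  d ∈ K (Γ.muRE c) (Γ.fRE c) ∧ Γ.BestResponds c d ∧
    ∀ d' ∈ K (Γ.muRE c) (Γ.fRE c),
      Γ.UF d' (Γ.muRE c) (Γ.fRE c) ≤ Γ.UF d (Γ.muRE c) (Γ.fRE c)

/-- `𝒮_k(μ, f)`: firm-optimal policies under the control `K` at `(μ, f)`. -/
def Smax
    (K : (GrpI → ((j : Fin N) → Xs j) → ℝ) → (GrpI → ((j : Fin N) → Xs j) → ℝ) →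
      Set (GrpI → ((j : Fin N) → Xs j) → ℝ))
    (μ f : GrpI → ((j : Fin N) → Xs j) → ℝ) :
    Set (GrpI → ((j : Fin N) → Xs j) → ℝ) :=
  {d | d ∈ K μ f ∧ ∀ d' ∈ K μ f, Γ.UF d' μ f ≤ Γ.UF d μ f}

/-- A `k`-controlled `ε`-equilibrium. -/
def IsCtrlEpsEq
    (K : (GrpI → ((j : Fin N) → Xs j) → ℝ) → (GrpI → ((j : Fin N) → Xs j) → ℝ) →
      Set (GrpI → ((j : Fin N) → Xs j) → ℝ))
    (ε : ℝ) (c : GrpI → ℝ) (d : GrpI → ((j : Fin N) → Xs j) → ℝ) : Prop :=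
  ∃ μ f, FullSupp μ ∧ OpenBelief f ∧
    pairDist μ f (Γ.muRE c) (Γ.fRE c) ≤ ε ∧
    Γ.BestResponds c d ∧ d ∈ K μ f ∧ ∀ d' ∈ K μ f, Γ.UF d' μ f ≤ Γ.UF d μ f

/-- Best responses of applicants to a color-blind policy. -/
def BestRespondsCb (c : GrpI → ℝ) (dcb : ((j : Fin N) → Xs j) → ℝ) : Prop :=
  ∀ (i : GrpI) (c' : ℝ), Γ.Uapp i c' dcb ≤ Γ.Uapp i (c i) dcb

/-- An equilibrium when data is color-blind (unrestricted control). -/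
def IsCbEquilibrium (c : GrpI → ℝ) (dcb : ((j : Fin N) → Xs j) → ℝ) : Prop :=
  IsCbPolicy dcb ∧ Γ.BestRespondsCb c dcb ∧
    ∀ dcb', IsCbPolicy dcb' →
      Γ.UFcb dcb' (Γ.mucbRE c) (Γ.fcbRE c) ≤ Γ.UFcb dcb (Γ.mucbRE c) (Γ.fcbRE c)

/-- A `k_cb`-controlled equilibrium when data is color-blind. -/
def IsCbControlledEq (K : Set (((j : Fin N) → Xs j) → ℝ)) (c : GrpI → ℝ)
    (dcb : ((j : Fin N) → Xs j) → ℝ) : Prop :=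
  dcb ∈ K ∧ Γ.BestRespondsCb c dcb ∧
    ∀ dcb' ∈ K,
      Γ.UFcb dcb' (Γ.mucbRE c) (Γ.fcbRE c) ≤ Γ.UFcb dcb (Γ.mucbRE c) (Γ.fcbRE c)

end Game

/-- A control when data is color-blind: for each `X` and each
`(μ_cb, f_cb) ∈ Δ°(X) × (0,1)^X` it specifies a nonempty compact set of
color-blind decision policies. -/
structure CbControl : Type 1 where
  sets : ∀ (N : ℕ) (Xs : Fin N → Type) [∀ j, Fintype (Xs j)] [∀ j, Nonempty (Xs j)],
    (((j : Fin N) → Xs j) → ℝ) → (((j : Fin N) → Xs j) → ℝ) →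
      Set (((j : Fin N) → Xs j) → ℝ)
  nonempty : ∀ (N : ℕ) (Xs : Fin N → Type) [∀ j, Fintype (Xs j)]
    [∀ j, Nonempty (Xs j)] (μ f : ((j : Fin N) → Xs j) → ℝ),
    (∀ x, 0 < μ x) → (∑ x, μ x = 1) → (∀ x, f x ∈ Set.Ioo (0 : ℝ) 1) →
    (sets N Xs μ f).Nonempty
  compact : ∀ (N : ℕ) (Xs : Fin N → Type) [∀ j, Fintype (Xs j)]
    [∀ j, Nonempty (Xs j)] (μ f : ((j : Fin N) → Xs j) → ℝ),
    (∀ x, 0 < μ x) → (∑ x, μ x = 1) → (∀ x, f x ∈ Set.Ioo (0 : ℝ) 1) →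
    IsCompact (sets N Xs μ f)
  mem_policy : ∀ (N : ℕ) (Xs : Fin N → Type) [∀ j, Fintype (Xs j)]
    [∀ j, Nonempty (Xs j)] (μ f : ((j : Fin N) → Xs j) → ℝ),
    (∀ x, 0 < μ x) → (∑ x, μ x = 1) → (∀ x, f x ∈ Set.Ioo (0 : ℝ) 1) →
    sets N Xs μ f ⊆ {dcb | IsCbPolicy dcb}


/-!
The equal opportunity set is the slice `TP_w = TP_b` of the compact cube `[0,1]^{I×X}`, and `TP`
is jointly continuous wherever its denominator is positive, so the correspondence has a closed
graph and is upper hemicontinuous. For lower hemicontinuity, scale each group's part of a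
feasible `d` by `min TP_w TP_b / TP_i`: the result is feasible at every nearby `(μ, f)` and tends
to `d`. Berge's maximum theorem then makes the firm-optimal correspondence upper hemicontinuous.

This gives condition (1) of non-fragility at each equilibrium, and uniformly in the equilibrium
because there are finitely many equilibrium thresholds: the applicants' unique best response is
`c i = ω · benefit`, and at an equilibrium the firm accepts exactly the features of positive
value, unless some feature has value zero, which pins `G (c i)`. For condition (2), all
`ε`-equilibria lie in a compact set of profiles; a profile that is not a controlled equilibrium
either violates the (closed) best-response condition of the applicants or has a policy outside
the firm-optimal set at `(μ_RE, f_RE)`, and by Berge both persist nearby and for small `ε`.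
-/

open Filter Topology

theorem IsCompact.eventually_forall_of_forall_eventually_prod {α β : Type*}
    [TopologicalSpace β] {l : Filter α} {K : Set β}
    (hK : IsCompact K) {P : α → β → Prop} (h : ∀ y ∈ K, ∀ᶠ p in l ×ˢ 𝓝 y, P p.1 p.2) :
    ∀ᶠ a in l, ∀ y ∈ K, P a y :=
  (Filter.Eventually.curry (hK.mem_prod_nhdsSet_of_forall h)).mono fun _ h' =>
    h'.self_of_nhdsSet

section Correspondence

variable {α β : Type*} [TopologicalSpace α] [TopologicalSpace β] {F : α → Set β} {S : Set α}

theorem upperHemicontinuousOn'_of_eventually_notMem {K : Set β} (hK : IsCompact K)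
    (hFK : ∀ a ∈ S, F a ⊆ K)
    (h : ∀ a ∈ S, ∀ y ∈ K, y ∉ F a → ∀ᶠ p in 𝓝[S] a ×ˢ 𝓝 y, p.2 ∉ F p.1) :
    UpperHemicontinuousOn' F S := by
  intro a ha V hV hFV
  have hout := (hK.diff hV).eventually_forall_of_forall_eventually_prod
    (P := fun a' y => y ∉ F a') fun y hy => h a ha y hy.1 fun hyF => hy.2 (hFV hyF)
  filter_upwards [hout, self_mem_nhdsWithin] with a' hout' ha' y hy
  by_contra hyV
  exact hout' y ⟨hFK a' ha' hy, hyV⟩ hy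

theorem UpperHemicontinuousOn'.eventually_notMem [T2Space β]
    (hF : UpperHemicontinuousOn' F S) {a : α} (ha : a ∈ S) (hFa : IsCompact (F a)) {y : β}
    (hy : y ∉ F a) : ∀ᶠ p in 𝓝[S] a ×ˢ 𝓝 y, p.2 ∉ F p.1 := by
  obtain ⟨U, hU, W, hW, hUW⟩ := Filter.disjoint_iff.mp (hFa.disjoint_nhdsSet_nhds hy)
  obtain ⟨U', hU'o, hFU', hU'U⟩ := mem_nhdsSet_iff_exists.mp hU
  exact ((hF a ha U' hU'o hFU').prod_mk hW).mono fun p hp hpF =>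
    Set.disjoint_left.mp hUW (hU'U (hp.1 hpF)) hp.2

/-- Berge's maximum theorem, in the form of a locally closed graph of the argmax. -/
theorem eventually_notMem_argmax [T2Space β] {u : α → β → ℝ}
    (hF : UpperHemicontinuousOn' F S) (hF' : LowerHemicontinuousOn' F S)
    (hu : Continuous (Function.uncurry u)) {a : α} (ha : a ∈ S) (hFa : IsCompact (F a))
    {y : β} (hy : y ∉ {y | y ∈ F a ∧ ∀ y' ∈ F a, u a y' ≤ u a y}) :
    ∀ᶠ p in 𝓝[S] a ×ˢ 𝓝 y, p.2 ∉ {y | y ∈ F p.1 ∧ ∀ y' ∈ F p.1, u p.1 y' ≤ u p.1 y} := by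
  by_cases hya : y ∈ F a
  · obtain ⟨y₀, hy₀, hlt⟩ : ∃ y₀ ∈ F a, u a y < u a y₀ := by
      by_contra! h
      exact hy ⟨hya, h⟩
    -- a feasible point beating `y` survives near `a` by lower hemicontinuity
    obtain ⟨m, hym, hmy₀⟩ := exists_between hlt
    obtain ⟨A, B, hAo, haA, hBo, hy₀B, hAB⟩ :=
      mem_nhds_prod_iff'.mp ((hu.continuousAt (x := (a, y₀))).eventually (eventually_gt_nhds hmy₀))
    have hmeet : ∀ᶠ a' in 𝓝[S] a, (F a' ∩ B).Nonempty := hF' a ha B hBo ⟨y₀, hy₀, hy₀B⟩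
    have hA : ∀ᶠ a' in 𝓝[S] a, a' ∈ A := mem_nhdsWithin_of_mem_nhds (hAo.mem_nhds haA)
    have hbelow : ∀ᶠ p in 𝓝[S] a ×ˢ 𝓝 y, u p.1 p.2 < m := by
      have := (hu.continuousAt (x := (a, y))).eventually (eventually_lt_nhds hym)
      rw [nhds_prod_eq] at this
      exact this.filter_mono (prod_mono nhdsWithin_le_nhds le_rfl)
    filter_upwards [(hmeet.and hA).prod_inl (𝓝 y), hbelow]
      with p ⟨⟨y', hy'F, hy'B⟩, hpA⟩ hpm hp
    exact (hpm.trans (@hAB (p.1, y') ⟨hpA, hy'B⟩)).not_ge (hp.2 y' hy'F)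
  · exact (hF.eventually_notMem ha hFa hya).mono fun p hp hp' => hp hp'.1

theorem upperHemicontinuousOn'_argmax [T2Space β] {u : α → β → ℝ} {K : Set β}
    (hK : IsCompact K) (hFK : ∀ a ∈ S, F a ⊆ K) (hFc : ∀ a ∈ S, IsCompact (F a))
    (hF : UpperHemicontinuousOn' F S) (hF' : LowerHemicontinuousOn' F S)
    (hu : Continuous (Function.uncurry u)) :
    UpperHemicontinuousOn' (fun a => {y | y ∈ F a ∧ ∀ y' ∈ F a, u a y' ≤ u a y}) S :=
  upperHemicontinuousOn'_of_eventually_notMem hK (fun a ha _ hy => hFK a ha hy.1)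
    fun a ha _ _ hy => eventually_notMem_argmax hF hF' hu ha (hFc a ha) hy

end Correspondence

theorem eventually_forall_dist_le {X Y Z : Type*} [PseudoMetricSpace X] [TopologicalSpace Y]
    [TopologicalSpace Z] {g : Y → X} {y₀ : Y} (hg : ContinuousAt g y₀) {z₀ : Z} {T : Set X}
    {P : X → Z → Prop} (hP : ∀ᶠ p in 𝓝[T] (g y₀) ×ˢ 𝓝 z₀, P p.1 p.2) :
    ∀ᶠ q in 𝓝[>] (0 : ℝ) ×ˢ 𝓝 (y₀, z₀), ∀ x ∈ T, dist x (g q.2.1) ≤ q.1 → P x q.2.2 := by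
  obtain ⟨A, hA, B, hB, hAB⟩ := Filter.eventually_prod_iff.mp hP
  obtain ⟨r, hr, hrA⟩ := Metric.mem_nhdsWithin_iff.mp hA
  have hgy : ∀ᶠ y in 𝓝 y₀, dist (g y) (g y₀) < r / 2 :=
    hg.eventually (Metric.ball_mem_nhds _ (half_pos hr))
  filter_upwards [prod_mem_prod (Ioo_mem_nhdsGT (half_pos hr)) (prod_mem_nhds hgy hB)]
  rintro ⟨ε, y, z⟩ ⟨hε, hy, hz⟩ x hxT hx
  refine hAB (hrA ⟨?_, hxT⟩) hz
  calc dist x (g y₀) ≤ dist x (g y) + dist (g y) (g y₀) := dist_triangle _ _ _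
    _ < r := by linarith [hε.2, show dist (g y) (g y₀) < r / 2 from hy]

theorem continuous_setIntegral_Iic {φ : ℝ → ℝ} (hφ : Integrable φ) :
    Continuous fun c => ∫ t in Set.Iic c, φ t := by
  have h : (fun c => ∫ t in Set.Iic c, φ t) =
      fun c => (∫ t in (0 : ℝ)..c, φ t) + ∫ t in Set.Iic (0 : ℝ), φ t := by
    funext c
    rw [← intervalIntegral.integral_Iic_sub_Iic hφ.integrableOn hφ.integrableOn, sub_add_cancel]
  rw [h]
  exact (hφ.continuous_primitive 0).add continuous_const

theorem setIntegral_Iic_lt_of_sign_change {h : ℝ → ℝ} (hh : Integrable h) {a b : ℝ}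
    (hpos : ∀ t < a, 0 < h t) (hneg : ∀ t, a < t → h t < 0) (hb : b ≠ a) :
    ∫ t in Set.Iic b, h t < ∫ t in Set.Iic a, h t := by
  have hdiff := intervalIntegral.integral_Iic_sub_Iic (a := b) (b := a) hh.integrableOn
    hh.integrableOn
  rcases hb.lt_or_gt with hba | hab
  · have := intervalIntegral.intervalIntegral_pos_of_pos_on hh.intervalIntegrable
      (fun t ht => hpos t ht.2) hba
    linarith
  · have := intervalIntegral.intervalIntegral_pos_of_pos_on (f := fun t => -h t)
      hh.neg.intervalIntegrable
      (fun t ht => neg_pos.2 (hneg t ht.1)) hab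
    rw [intervalIntegral.integral_neg, ← intervalIntegral.integral_symm] at this
    linarith

theorem sq_le_sum_sum_sq {ι κ : Type*} [Fintype ι] [Fintype κ] (v : ι → κ → ℝ) (i : ι)
    (x : κ) : v i x ^ 2 ≤ ∑ i, ∑ x, v i x ^ 2 :=
  (Finset.single_le_sum (fun _ _ => sq_nonneg _) (Finset.mem_univ x)).trans
    (Finset.single_le_sum (f := fun i => ∑ x, v i x ^ 2)
      (fun _ _ => Finset.sum_nonneg fun _ _ => sq_nonneg _) (Finset.mem_univ i))

theorem eq_ite_of_forall_sum_mul_le {ι κ : Type*} [Fintype ι] [Fintype κ] {w d : ι → κ → ℝ}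
    (hd : ∀ i x, d i x ∈ Set.Icc (0 : ℝ) 1)
    (hmax : ∀ d' : ι → κ → ℝ, (∀ i x, d' i x ∈ Set.Icc (0 : ℝ) 1) →
      ∑ i, ∑ x, d' i x * w i x ≤ ∑ i, ∑ x, d i x * w i x)
    {i : ι} {x : κ} (hw : w i x ≠ 0) : d i x = if 0 < w i x then 1 else 0 := by
  have hchange : ∀ v ∈ Set.Icc (0 : ℝ) 1, (v - d i x) * w i x ≤ 0 := by
    intro v hv
    have hterm : ∀ j y, (if j = i ∧ y = x then v else d j y) * w j y =
        d j y * w j y + if j = i ∧ y = x then (v - d i x) * w i x else 0 := by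
      intro j y
      split_ifs with h
      · obtain ⟨rfl, rfl⟩ := h
        ring
      · ring
    have hle := hmax (fun j y => if j = i ∧ y = x then v else d j y) fun j y => by
      split_ifs
      exacts [hv, hd j y]
    rw [Finset.sum_congr rfl fun j _ => Finset.sum_congr rfl fun y _ => hterm j y] at hle
    simpa only [ite_and, Finset.sum_add_distrib, Finset.sum_ite_irrel, Finset.sum_ite_eq',
      Finset.mem_univ, ↓reduceIte, Finset.sum_const_zero, add_le_iff_nonpos_right] using hle
  rcases hw.lt_or_gt with hneg | hpos
  · rw [if_neg hneg.not_gt]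
    nlinarith [hchange 0 ⟨le_rfl, zero_le_one⟩, (hd i x).1]
  · rw [if_pos hpos]
    nlinarith [hchange 1 ⟨zero_le_one, le_rfl⟩, (hd i x).2]

abbrev FunIX (N : ℕ) (Xs : Fin N → Type) : Type := GrpI → ((j : Fin N) → Xs j) → ℝ

section EqualOpportunity

variable {N : ℕ} {Xs : Fin N → Type}

theorem isCompact_setOf_isPolicy : IsCompact {d : FunIX N Xs | IsPolicy d} := by
  convert isCompact_univ_pi fun _ : GrpI =>
    isCompact_univ_pi fun _ : (j : Fin N) → Xs j => isCompact_Icc (a := (0 : ℝ)) (b := 1)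
  simp [IsPolicy, Set.pi]

variable [∀ j, Fintype (Xs j)]

def admissible : Set (FunIX N Xs × FunIX N Xs) := {a | FullSupp a.1 ∧ OpenBelief a.2}

theorem dist_le_pairDist (μ f μ' f' : FunIX N Xs) :
    dist (μ, f) (μ', f') ≤ pairDist μ f μ' f' := by
  have hμ := sq_le_sum_sum_sq fun i x => μ i x - μ' i x
  have hf := sq_le_sum_sum_sq fun i x => f i x - f' i x
  have hμ0 : 0 ≤ ∑ i, ∑ x, (μ i x - μ' i x) ^ 2 := by positivity
  have hf0 : 0 ≤ ∑ i, ∑ x, (f i x - f' i x) ^ 2 := by positivity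
  rw [Prod.dist_eq]
  refine max_le ?_ ?_ <;>
    refine (dist_pi_le_iff (Real.sqrt_nonneg _)).2 fun i =>
      (dist_pi_le_iff (Real.sqrt_nonneg _)).2 fun x => Real.abs_le_sqrt ?_
  · linarith [hμ i x]
  · linarith [hf i x]

theorem TP_nonneg {d : FunIX N Xs} {a : FunIX N Xs × FunIX N Xs} (ha : a ∈ admissible)
    (hd : IsPolicy d) (i : GrpI) : 0 ≤ TP i d a.1 a.2 :=
  div_nonneg (Finset.sum_nonneg fun x _ =>
      mul_nonneg (mul_nonneg (hd i x).1 (ha.1.1 i x).le) (ha.2 i x).1.le)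
    (Finset.sum_nonneg fun x _ => mul_nonneg (ha.1.1 i x).le (ha.2 i x).1.le)

theorem TP_smul (i : GrpI) (r : ℝ) {d d' : FunIX N Xs} (h : ∀ x, d' i x = r * d i x)
    (μ f : FunIX N Xs) : TP i d' μ f = r * TP i d μ f := by
  simp only [TP, h, mul_assoc, ← Finset.mul_sum, mul_div_assoc]

theorem continuousAt_TP (i : GrpI) {p : (FunIX N Xs × FunIX N Xs) × FunIX N Xs}
    (hp : ∑ x, p.1.1 i x * p.1.2 i x ≠ 0) :
    ContinuousAt (fun p : (FunIX N Xs × FunIX N Xs) × FunIX N Xs => TP i p.2 p.1.1 p.1.2) p := by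
  unfold TP
  fun_prop (disch := exact hp)

theorem isCompact_EOset (μ f : FunIX N Xs) : IsCompact (EOset μ f) :=
  isCompact_setOf_isPolicy.inter_right
    (isClosed_eq (by unfold TP; fun_prop) (by unfold TP; fun_prop))

/-- When `TP i d = 0` the factor is the junk value `_ / 0 = 0`, harmless since then `d i = 0`. -/
def eoRescale (d : FunIX N Xs) (a : FunIX N Xs × FunIX N Xs) : FunIX N Xs := fun i x =>
  min (TP GrpI.w d a.1 a.2) (TP GrpI.b d a.1 a.2) / TP i d a.1 a.2 * d i x

theorem TP_eoRescale {d : FunIX N Xs} {a : FunIX N Xs × FunIX N Xs} (ha : a ∈ admissible)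
    (hd : IsPolicy d) (i : GrpI) :
    TP i (eoRescale d a) a.1 a.2 = min (TP GrpI.w d a.1 a.2) (TP GrpI.b d a.1 a.2) := by
  rw [TP_smul i _ (fun x => rfl)]
  rcases (TP_nonneg ha hd i).eq_or_lt with h0 | hpos
  · rw [← h0, mul_zero]
    refine le_antisymm (le_min (TP_nonneg ha hd _) (TP_nonneg ha hd _)) ?_
    cases i
    · rw [h0]; exact min_le_left _ _
    · rw [h0]; exact min_le_right _ _
  · exact div_mul_cancel₀ _ hpos.ne'

theorem eoRescale_mem_EOset {d : FunIX N Xs} {a : FunIX N Xs × FunIX N Xs}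
    (ha : a ∈ admissible) (hd : IsPolicy d) : eoRescale d a ∈ EOset a.1 a.2 := by
  refine ⟨fun i x => ?_, by rw [TP_eoRescale ha hd, TP_eoRescale ha hd]⟩
  have hr0 : 0 ≤ min (TP GrpI.w d a.1 a.2) (TP GrpI.b d a.1 a.2) / TP i d a.1 a.2 :=
    div_nonneg (le_min (TP_nonneg ha hd _) (TP_nonneg ha hd _)) (TP_nonneg ha hd i)
  have hr1 : min (TP GrpI.w d a.1 a.2) (TP GrpI.b d a.1 a.2) / TP i d a.1 a.2 ≤ 1 := by
    refine div_le_one_of_le₀ ?_ (TP_nonneg ha hd i)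
    cases i
    exacts [min_le_left _ _, min_le_right _ _]
  exact ⟨mul_nonneg hr0 (hd i x).1, mul_le_one₀ hr1 (hd i x).1 (hd i x).2⟩

variable [∀ j, Nonempty (Xs j)]

theorem sum_mul_pos_of_mem_admissible {a : FunIX N Xs × FunIX N Xs}
    (ha : a ∈ admissible) (i : GrpI) : 0 < ∑ x, a.1 i x * a.2 i x :=
  Finset.sum_pos (fun x _ => mul_pos (ha.1.1 i x) (ha.2 i x).1) Finset.univ_nonempty

theorem one_mem_EOset {μ f : FunIX N Xs} (hμ : FullSupp μ)
    (hf : OpenBelief f) : 1 ∈ EOset μ f := by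
  have hTP : ∀ i, TP i 1 μ f = 1 := fun i => by
    simpa [TP] using div_self (sum_mul_pos_of_mem_admissible (a := (μ, f)) ⟨hμ, hf⟩ i).ne'
  exact ⟨fun _ _ => ⟨zero_le_one, le_rfl⟩, by rw [hTP, hTP]⟩

theorem upperHemicontinuousOn'_EOset :
    UpperHemicontinuousOn' (fun a : FunIX N Xs × FunIX N Xs => EOset a.1 a.2) admissible := by
  refine upperHemicontinuousOn'_of_eventually_notMem isCompact_setOf_isPolicy
    (fun _ _ _ hd => hd.1) fun a ha d hd hdEO => ?_
  have hTP : TP GrpI.w d a.1 a.2 - TP GrpI.b d a.1 a.2 ≠ 0 :=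
    sub_ne_zero.mpr fun h => hdEO ⟨hd, h⟩
  have hev := ((continuousAt_TP GrpI.w (p := (a, d))
    (sum_mul_pos_of_mem_admissible ha _).ne').sub
    (continuousAt_TP GrpI.b (sum_mul_pos_of_mem_admissible ha _).ne')).eventually_ne hTP
  rw [nhds_prod_eq] at hev
  exact (hev.filter_mono (prod_mono nhdsWithin_le_nhds le_rfl)).mono fun p hp hpEO =>
    hp (sub_eq_zero.mpr hpEO.2)

theorem eq_zero_of_TP_eq_zero {d : FunIX N Xs} {a : FunIX N Xs × FunIX N Xs}
    (ha : a ∈ admissible) (hd : IsPolicy d) {i : GrpI} (h : TP i d a.1 a.2 = 0)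
    (x : (j : Fin N) → Xs j) : d i x = 0 := by
  have hterms := (Finset.sum_eq_zero_iff_of_nonneg fun y _ =>
    mul_nonneg (mul_nonneg (hd i y).1 (ha.1.1 i y).le) (ha.2 i y).1.le).mp
    ((div_eq_zero_iff.mp h).resolve_right (sum_mul_pos_of_mem_admissible ha i).ne') x
    (Finset.mem_univ x)
  simpa [(ha.1.1 i x).ne', (ha.2 i x).1.ne'] using hterms

theorem tendsto_eoRescale {d : FunIX N Xs}
    {a : FunIX N Xs × FunIX N Xs} (ha : a ∈ admissible) (hd : d ∈ EOset a.1 a.2) :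
    Tendsto (eoRescale d) (𝓝 a) (𝓝 d) := by
  have hTP : ∀ i, TP i d a.1 a.2 = TP GrpI.w d a.1 a.2 := by
    intro i; cases i
    exacts [rfl, hd.2.symm]
  rcases (TP_nonneg ha hd.1 GrpI.w).eq_or_lt with h0 | hpos
  · have hzero : ∀ a', eoRescale d a' = d := fun a' => by
      funext i x
      simp [eoRescale, eq_zero_of_TP_eq_zero ha hd.1 ((hTP i).trans h0.symm) x]
    rw [show eoRescale d = fun _ => d from funext hzero]
    exact tendsto_const_nhds
  · have hcont : ∀ i, ContinuousAt (fun a' : FunIX N Xs × FunIX N Xs => TP i d a'.1 a'.2) a :=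
      fun i => by
        unfold TP
        fun_prop (disch := exact (sum_mul_pos_of_mem_admissible ha i).ne')
    have hfactor : ∀ i, Tendsto (fun a' : FunIX N Xs × FunIX N Xs =>
        min (TP GrpI.w d a'.1 a'.2) (TP GrpI.b d a'.1 a'.2) / TP i d a'.1 a'.2) (𝓝 a) (𝓝 1) := by
      intro i
      have := ((hcont GrpI.w).tendsto.min (hcont GrpI.b).tendsto).div (hcont i).tendsto
        ((hTP i).trans_ne hpos.ne')
      rw [← hd.2, min_self, hTP i, div_self hpos.ne'] at this
      exact this
    refine tendsto_pi_nhds.2 fun i => tendsto_pi_nhds.2 fun x => ?_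
    have := (hfactor i).mul_const (d i x)
    rwa [one_mul] at this

theorem lowerHemicontinuousOn'_EOset :
    LowerHemicontinuousOn' (fun a : FunIX N Xs × FunIX N Xs => EOset a.1 a.2) admissible := by
  rintro a ha V hV ⟨d, hdEO, hdV⟩
  filter_upwards [mem_nhdsWithin_of_mem_nhds ((tendsto_eoRescale ha hdEO) (hV.mem_nhds hdV)),
    self_mem_nhdsWithin] with a' ha'V ha'
  exact ⟨eoRescale d a', eoRescale_mem_EOset ha' hdEO.1, ha'V⟩

end EqualOpportunity

namespace Game

variable {N : ℕ} {Xs : Fin N → Type} [∀ j, Fintype (Xs j)] [∀ j, Nonempty (Xs j)]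
variable (Γ : Game N Xs)

theorem continuous_G : Continuous Γ.G := continuous_setIntegral_Iic Γ.g_int

theorem strictMono_G : StrictMono Γ.G := by
  intro x y hxy
  have := intervalIntegral.integral_Iic_sub_Iic Γ.g_int.integrableOn Γ.g_int.integrableOn
    (a := x) (b := y)
  have := intervalIntegral.intervalIntegral_pos_of_pos Γ.g_int.intervalIntegrable Γ.g_pos hxy
  simp only [G]
  linarith

theorem setIntegral_g_pos {s : Set ℝ} (hs : 0 < volume s) : 0 < ∫ t in s, Γ.g t := by
  refine (setIntegral_pos_iff_support_of_nonneg_ae (ae_of_all _ fun t => (Γ.g_pos t).le)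
    Γ.g_int.integrableOn).mpr ?_
  rwa [show Function.support Γ.g = Set.univ from
    Set.eq_univ_of_forall fun t => (Γ.g_pos t).ne', Set.univ_inter]

theorem G_pos (c : ℝ) : 0 < Γ.G c :=
  Γ.setIntegral_g_pos (by simp)

theorem G_lt_one (c : ℝ) : Γ.G c < 1 := by
  have hsplit := integral_add_compl (measurableSet_Iic (a := c)) Γ.g_int
  rw [Set.compl_Iic, Γ.g_norm] at hsplit
  have := Γ.setIntegral_g_pos (s := Set.Ioi c) (by simp)
  simp only [G]
  linarith

theorem p_pos (i : GrpI) (x : (j : Fin N) → Xs j) (y : Cls) : 0 < Γ.p i x y :=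
  mul_pos (Γ.pY_pos _ y) (Γ.pC_pos i x)

theorem sum_p (i : GrpI) (y : Cls) : ∑ x, Γ.p i x y = 1 := by
  rw [← Finset.sum_fiberwise Finset.univ Γ.proj, ← Γ.pY_sum y]
  refine Finset.sum_congr rfl fun xY _ => ?_
  rw [← mul_one (Γ.pY xY y), ← Γ.pC_sum i xY, Finset.mul_sum]
  refine Finset.sum_congr rfl fun x hx => ?_
  rw [p, show Γ.proj x = xY from (Finset.mem_filter.mp hx).2]

theorem lam_pos (i : GrpI) : 0 < Γ.lam i := by
  cases i
  · exact Γ.lamw_pos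
  · exact sub_pos.mpr Γ.lamw_lt_one

theorem mixture_pos (c : GrpI → ℝ) (i : GrpI) (x : (j : Fin N) → Xs j) :
    0 < Γ.G (c i) * Γ.p i x Cls.q + (1 - Γ.G (c i)) * Γ.p i x Cls.u :=
  add_pos (mul_pos (Γ.G_pos _) (Γ.p_pos i x _))
    (mul_pos (sub_pos.mpr (Γ.G_lt_one _)) (Γ.p_pos i x _))

theorem fRE_mem_Ioo (c : GrpI → ℝ) (i : GrpI) (x : (j : Fin N) → Xs j) :
    Γ.fRE c i x ∈ Set.Ioo (0 : ℝ) 1 := by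
  have hu := mul_pos (sub_pos.mpr (Γ.G_lt_one (c i))) (Γ.p_pos i x Cls.u)
  refine ⟨div_pos (mul_pos (Γ.G_pos _) (Γ.p_pos i x _)) (Γ.mixture_pos c i x), ?_⟩
  rw [fRE, div_lt_one (Γ.mixture_pos c i x)]
  linarith

theorem sum_muRE (c : GrpI → ℝ) : ∑ i, ∑ x, Γ.muRE c i x = 1 := by
  have hgroup : ∀ i, ∑ x, Γ.muRE c i x = Γ.lam i := fun i => by
    simp only [muRE, ← Finset.mul_sum, Finset.sum_add_distrib, Γ.sum_p]
    ring
  rw [Finset.sum_congr rfl fun i _ => hgroup i,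
    show (Finset.univ : Finset GrpI) = {GrpI.w, GrpI.b} from rfl, Finset.sum_pair (by decide)]
  simp [lam]

theorem RE_mem_admissible (c : GrpI → ℝ) : (Γ.muRE c, Γ.fRE c) ∈ admissible :=
  ⟨⟨fun i x => mul_pos (Γ.lam_pos i) (Γ.mixture_pos c i x), Γ.sum_muRE c⟩, Γ.fRE_mem_Ioo c⟩

theorem continuous_RE : Continuous fun c : GrpI → ℝ => (Γ.muRE c, Γ.fRE c) := by
  have hG := Γ.continuous_G
  refine .prodMk (continuous_pi fun i => continuous_pi fun x => ?_)
    (continuous_pi fun i => continuous_pi fun x => ?_)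
  · simp only [muRE]
    fun_prop
  · simp only [fRE]
    exact Continuous.div (by fun_prop) (by fun_prop) fun c => (Γ.mixture_pos c i x).ne'

/-- The gain in acceptance probability from being qualified rather than unqualified. -/
def benefit (i : GrpI) (di : ((j : Fin N) → Xs j) → ℝ) : ℝ :=
  ∑ x, (Γ.p i x Cls.q - Γ.p i x Cls.u) * di x

theorem integrable_mul_g : Integrable fun t => t * Γ.g t :=
  Γ.g_abs_int.mono' (aestronglyMeasurable_id.mul Γ.g_int.aestronglyMeasurable)
    (ae_of_all _ fun t => by rw [Real.norm_eq_abs, abs_mul, abs_of_pos (Γ.g_pos t)])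

theorem Uapp_eq (i : GrpI) (c : ℝ) (di : ((j : Fin N) → Xs j) → ℝ) :
    Γ.Uapp i c di = Γ.om * ∑ x, Γ.p i x Cls.u * di x +
      ∫ t in Set.Iic c, (Γ.om * Γ.benefit i di - t) * Γ.g t := by
  have hint : ∫ t in Set.Iic c, (Γ.om * Γ.benefit i di - t) * Γ.g t =
      Γ.om * Γ.benefit i di * Γ.G c - ∫ t in Set.Iic c, t * Γ.g t := by
    simp_rw [sub_mul]
    rw [integral_sub (Γ.g_int.const_mul _).integrableOn Γ.integrable_mul_g.integrableOn,
      integral_const_mul, G]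
  have hsum : ∑ x, (Γ.G c * Γ.p i x Cls.q + (1 - Γ.G c) * Γ.p i x Cls.u) * di x =
      Γ.G c * Γ.benefit i di + ∑ x, Γ.p i x Cls.u * di x := by
    rw [benefit, Finset.mul_sum, ← Finset.sum_add_distrib]
    exact Finset.sum_congr rfl fun x _ => by ring
  rw [Uapp, hsum, hint]
  ring

theorem Uapp_lt_of_ne (i : GrpI) (di : ((j : Fin N) → Xs j) → ℝ) {c : ℝ}
    (hc : c ≠ Γ.om * Γ.benefit i di) :
    Γ.Uapp i c di < Γ.Uapp i (Γ.om * Γ.benefit i di) di := by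
  have hint : Integrable fun t => (Γ.om * Γ.benefit i di - t) * Γ.g t :=
    ((Γ.g_int.const_mul (Γ.om * Γ.benefit i di)).sub Γ.integrable_mul_g).congr
      (ae_of_all _ fun t => by simp only [Pi.sub_apply]; ring)
  rw [Uapp_eq, Uapp_eq]
  exact (add_lt_add_iff_left _).2 (setIntegral_Iic_lt_of_sign_change hint
    (fun t ht => mul_pos (sub_pos.2 ht) (Γ.g_pos t))
    (fun t ht => mul_neg_of_neg_of_pos (sub_neg.2 ht) (Γ.g_pos t)) hc)

theorem bestResponds_iff {c : GrpI → ℝ} {d : FunIX N Xs} :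
    Γ.BestResponds c d ↔ ∀ i, c i = Γ.om * Γ.benefit i (d i) := by
  refine ⟨fun hbr i => ?_, fun h i c' => ?_⟩
  · by_contra hne
    exact (hbr i _).not_gt (Γ.Uapp_lt_of_ne i (d i) hne)
  · rw [h i]
    rcases eq_or_ne c' (Γ.om * Γ.benefit i (d i)) with rfl | hne
    · exact le_rfl
    · exact (Γ.Uapp_lt_of_ne i (d i) hne).le

theorem isClosed_setOf_bestResponds :
    IsClosed {p : (GrpI → ℝ) × FunIX N Xs | Γ.BestResponds p.1 p.2} := by
  simp only [Γ.bestResponds_iff, Set.ofPred_forall]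
  exact isClosed_iInter fun i => isClosed_eq (by fun_prop) (by unfold benefit; fun_prop)

theorem sum_p_mul_mem_Icc (i : GrpI) (y : Cls) {di : ((j : Fin N) → Xs j) → ℝ}
    (hdi : ∀ x, di x ∈ Set.Icc (0 : ℝ) 1) : ∑ x, Γ.p i x y * di x ∈ Set.Icc (0 : ℝ) 1 :=
  ⟨Finset.sum_nonneg fun x _ => mul_nonneg (Γ.p_pos i x y).le (hdi x).1,
    Γ.sum_p i y ▸ Finset.sum_le_sum fun x _ =>
      mul_le_of_le_one_right (Γ.p_pos i x y).le (hdi x).2⟩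

theorem mem_Icc_of_bestResponds {c : GrpI → ℝ} {d : FunIX N Xs} (hbr : Γ.BestResponds c d)
    (hd : IsPolicy d) (i : GrpI) : c i ∈ Set.Icc (-Γ.om) Γ.om := by
  have hq := Γ.sum_p_mul_mem_Icc i Cls.q (hd i)
  have hu := Γ.sum_p_mul_mem_Icc i Cls.u (hd i)
  have hB : Γ.benefit i (d i) = ∑ x, Γ.p i x Cls.q * d i x - ∑ x, Γ.p i x Cls.u * d i x := by
    simp only [benefit, sub_mul, Finset.sum_sub_distrib]
  rw [Γ.bestResponds_iff.mp hbr i, hB]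
  constructor <;> nlinarith [hq.1, hq.2, hu.1, hu.2, Γ.om_pos]

def firmGain (μ f : FunIX N Xs) (i : GrpI) (x : (j : Fin N) → Xs j) : ℝ :=
  μ i x * (f i x * Γ.vq - (1 - f i x) * Γ.vu)

theorem UF_eq_sum_firmGain (d μ f : FunIX N Xs) :
    Γ.UF d μ f = ∑ i, ∑ x, d i x * Γ.firmGain μ f i x := by
  simp only [UF, firmGain, mul_assoc]

variable {Γ} in
theorem IsEquilibrium.eq_ite {c : GrpI → ℝ} {d : FunIX N Xs} (hd : Γ.IsEquilibrium c d)
    {i : GrpI} {x : (j : Fin N) → Xs j} (hx : Γ.firmGain (Γ.muRE c) (Γ.fRE c) i x ≠ 0) :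
    d i x = if 0 < Γ.firmGain (Γ.muRE c) (Γ.fRE c) i x then 1 else 0 :=
  eq_ite_of_forall_sum_mul_le hd.1
    (fun d' hd' => by simpa only [UF_eq_sum_firmGain] using hd.2.2 d' hd') hx

theorem G_eq_of_firmGain_eq_zero {c : GrpI → ℝ} {i : GrpI} {x : (j : Fin N) → Xs j}
    (hx : Γ.firmGain (Γ.muRE c) (Γ.fRE c) i x = 0) :
    Γ.G (c i) = Γ.p i x Cls.u * Γ.vu / (Γ.p i x Cls.q * Γ.vq + Γ.p i x Cls.u * Γ.vu) := by
  have h := (mul_eq_zero.mp hx).resolve_left ((Γ.RE_mem_admissible c).1.1 i x).ne'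
  have hmix := Γ.mixture_pos c i x
  have := Γ.p_pos i x Cls.q
  have := Γ.p_pos i x Cls.u
  have := Γ.vq_pos
  have := Γ.vu_pos
  rw [fRE] at h
  field_simp at h
  rw [eq_div_iff (by positivity)]
  linear_combination h

theorem finite_setOf_isEquilibrium : {c | ∃ d, Γ.IsEquilibrium c d}.Finite := by
  refine (Set.Finite.pi (t := fun i =>
      Set.range (fun T : Finset ((j : Fin N) → Xs j) =>
        Γ.om * ∑ x ∈ T, (Γ.p i x Cls.q - Γ.p i x Cls.u)) ∪
      Γ.G ⁻¹' Set.range (fun x =>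
        Γ.p i x Cls.u * Γ.vu / (Γ.p i x Cls.q * Γ.vq + Γ.p i x Cls.u * Γ.vu)))
    fun i => (Set.finite_range _).union
      ((Set.finite_range _).preimage Γ.strictMono_G.injective.injOn)).subset ?_
  rintro c ⟨d, hd⟩ i -
  by_cases hzero : ∃ x, Γ.firmGain (Γ.muRE c) (Γ.fRE c) i x = 0
  · obtain ⟨x, hx⟩ := hzero
    exact Or.inr ⟨x, (Γ.G_eq_of_firmGain_eq_zero hx).symm⟩
  · refine Or.inl ⟨Finset.univ.filter fun x => 0 < Γ.firmGain (Γ.muRE c) (Γ.fRE c) i x, ?_⟩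
    dsimp only
    rw [Γ.bestResponds_iff.mp hd.2.1 i, benefit, Finset.sum_filter]
    congr 1
    refine Finset.sum_congr rfl fun x _ => ?_
    rw [hd.eq_ite (not_exists.mp hzero x)]
    split_ifs <;> simp

theorem continuous_UF :
    Continuous fun p : (FunIX N Xs × FunIX N Xs) × FunIX N Xs => Γ.UF p.2 p.1.1 p.1.2 := by
  unfold UF
  fun_prop

theorem upperHemicontinuousOn'_smax :
    UpperHemicontinuousOn' (fun a : FunIX N Xs × FunIX N Xs => Γ.Smax EOset a.1 a.2)
      admissible :=
  upperHemicontinuousOn'_argmax (u := fun (a : FunIX N Xs × FunIX N Xs) d => Γ.UF d a.1 a.2)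
    isCompact_setOf_isPolicy (fun _ _ _ hd => hd.1) (fun a _ => isCompact_EOset a.1 a.2)
    upperHemicontinuousOn'_EOset lowerHemicontinuousOn'_EOset Γ.continuous_UF

theorem eventually_notMem_smax {a : FunIX N Xs × FunIX N Xs} (ha : a ∈ admissible)
    {d : FunIX N Xs} (hd : d ∉ Γ.Smax EOset a.1 a.2) :
    ∀ᶠ p in 𝓝[admissible] a ×ˢ 𝓝 d, p.2 ∉ Γ.Smax EOset p.1.1 p.1.2 :=
  eventually_notMem_argmax (u := fun (a : FunIX N Xs × FunIX N Xs) d => Γ.UF d a.1 a.2)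
    upperHemicontinuousOn'_EOset lowerHemicontinuousOn'_EOset Γ.continuous_UF ha
    (isCompact_EOset a.1 a.2) hd

theorem eventually_smax_near_smax {a : FunIX N Xs × FunIX N Xs} (ha : a ∈ admissible)
    {δ : ℝ} (hδ : 0 < δ) :
    ∀ᶠ ε in 𝓝[>] (0 : ℝ), ∀ μ f, FullSupp μ → OpenBelief f → pairDist μ f a.1 a.2 ≤ ε →
      ∀ dh ∈ Γ.Smax EOset μ f, ∃ d' ∈ Γ.Smax EOset a.1 a.2, polDist dh d' ≤ δ := by
  have hV : IsOpen {dh | ∃ d' ∈ Γ.Smax EOset a.1 a.2, polDist dh d' < δ} := by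
    simp only [Set.ofPred_exists, Set.ofPred_and]
    exact isOpen_iUnion fun d' =>
      isOpen_const.inter (isOpen_lt (by unfold polDist; fun_prop) continuous_const)
  obtain ⟨r, hr, hball⟩ := Metric.mem_nhdsWithin_iff.mp
    (Γ.upperHemicontinuousOn'_smax a ha _ hV fun d hd => ⟨d, hd, by simpa [polDist] using hδ⟩)
  filter_upwards [Ioo_mem_nhdsGT hr] with ε hε μ f hμ hf hdist dh hdh
  obtain ⟨d', hd', hlt⟩ :=
    hball ⟨(dist_le_pairDist _ _ _ _).trans_lt (hdist.trans_lt hε.2), hμ, hf⟩ hdh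
  exact ⟨d', hd', hlt.le⟩

theorem eventually_smax_near_smax_of_isEquilibrium {δ : ℝ} (hδ : 0 < δ) :
    ∀ᶠ ε in 𝓝[>] (0 : ℝ), ∀ c d, Γ.IsEquilibrium c d → c GrpI.w ≠ c GrpI.b →
      ∀ μ f, FullSupp μ → OpenBelief f → pairDist μ f (Γ.muRE c) (Γ.fRE c) ≤ ε →
        ∀ dh ∈ Γ.Smax EOset μ f, ∃ d' ∈ Γ.Smax EOset (Γ.muRE c) (Γ.fRE c),
          polDist dh d' ≤ δ := by
  filter_upwards [(eventually_all_finite Γ.finite_setOf_isEquilibrium).2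
    fun c _ => Γ.eventually_smax_near_smax (Γ.RE_mem_admissible c) hδ] with ε hε c d hd _
  exact hε c ⟨d, hd⟩

theorem eventually_not_isCtrlEpsEq {c : GrpI → ℝ} {d : FunIX N Xs}
    (h : ¬ Γ.IsControlledEq EOset c d) :
    ∀ᶠ q in 𝓝[>] (0 : ℝ) ×ˢ 𝓝 (c, d), ¬ Γ.IsCtrlEpsEq EOset q.1 q.2.1 q.2.2 := by
  by_cases hbr : Γ.BestResponds c d
  · have hnear := eventually_forall_dist_le Γ.continuous_RE.continuousAt
      (P := fun a d => d ∉ Γ.Smax EOset a.1 a.2)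
      (Γ.eventually_notMem_smax (Γ.RE_mem_admissible c) fun hd => h ⟨hd.1, hbr, hd.2⟩)
    filter_upwards [hnear] with q hq ⟨μ, f, hμ, hf, hdist, _, hEO, hmax⟩
    exact hq (μ, f) ⟨hμ, hf⟩ ((dist_le_pairDist _ _ _ _).trans hdist) ⟨hEO, hmax⟩
  · have hnbr : ∀ᶠ p in 𝓝 (c, d), ¬ Γ.BestResponds p.1 p.2 :=
      Γ.isClosed_setOf_bestResponds.isOpen_compl.mem_nhds hbr
    filter_upwards [hnbr.prod_inr _] with q hq ⟨_, _, _, _, _, hbr', _⟩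
    exact hq hbr'

theorem eventually_ctrlEpsEq_near_controlledEq {δ : ℝ} (hδ : 0 < δ) :
    ∀ᶠ ε in 𝓝[>] (0 : ℝ), ∀ c d, Γ.IsCtrlEpsEq EOset ε c d →
      ∃ c' d', Γ.IsControlledEq EOset c' d' ∧ profDist c d c' d' ≤ δ := by
  set near := {p : (GrpI → ℝ) × FunIX N Xs |
    ∃ c' d', Γ.IsControlledEq EOset c' d' ∧ profDist p.1 p.2 c' d' < δ}
  have hnear : IsOpen near := by
    simp only [near, Set.ofPred_exists, Set.ofPred_and]
    exact isOpen_iUnion fun c' => isOpen_iUnion fun d' =>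
      isOpen_const.inter (isOpen_lt (by unfold profDist; fun_prop) continuous_const)
  have hK : IsCompact ((Set.univ.pi fun _ : GrpI => Set.Icc (-Γ.om) Γ.om) ×ˢ
      {d : FunIX N Xs | IsPolicy d}) :=
    (isCompact_univ_pi fun _ => isCompact_Icc).prod isCompact_setOf_isPolicy
  have hfar := (hK.diff hnear).eventually_forall_of_forall_eventually_prod
    (P := fun ε p => ¬ Γ.IsCtrlEpsEq EOset ε p.1 p.2) fun p hp =>
      Γ.eventually_not_isCtrlEpsEq fun hp' => hp.2 ⟨p.1, p.2, hp', by simpa [profDist] using hδ⟩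
  filter_upwards [hfar] with ε hε c d hcd
  obtain ⟨_, _, _, _, _, hbr, hEO, _⟩ := id hcd
  obtain ⟨c', d', hc'd', hlt⟩ : (c, d) ∈ near := by_contra fun hout =>
    hε (c, d) ⟨⟨fun i _ => Γ.mem_Icc_of_bestResponds hbr hEO.1 i, hEO.1⟩, hout⟩ hcd
  exact ⟨c', d', hc'd', hlt.le⟩

end Game

/-- The equal opportunity control is continuous -- nonempty- and
compact-valued, upper hemicontinuous and lower hemicontinuous on
`Δ°(I×X) × (0,1)^{I×X}` -- and consequently it is not fragile. -/
theorem equal_opportunity_continuous_and_not_fragile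
    {N : ℕ} {Xs : Fin N → Type} [∀ j, Fintype (Xs j)] [∀ j, Nonempty (Xs j)] :
    (∀ μ f : GrpI → ((j : Fin N) → Xs j) → ℝ, FullSupp μ → OpenBelief f →
      (EOset μ f).Nonempty ∧ IsCompact (EOset μ f)) ∧
    UpperHemicontinuousOn' (fun pf => EOset pf.1 pf.2)
      {pf : (GrpI → ((j : Fin N) → Xs j) → ℝ) × (GrpI → ((j : Fin N) → Xs j) → ℝ) |
        FullSupp pf.1 ∧ OpenBelief pf.2} ∧
    LowerHemicontinuousOn' (fun pf => EOset pf.1 pf.2)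
      {pf : (GrpI → ((j : Fin N) → Xs j) → ℝ) × (GrpI → ((j : Fin N) → Xs j) → ℝ) |
        FullSupp pf.1 ∧ OpenBelief pf.2} ∧
    (∀ Γ : Game N Xs, Γ.OneNotLV → ∀ δ : ℝ, 0 < δ →
      ∃ ε : ℝ, 0 < ε ∧
        (∀ c d, Γ.IsEquilibrium c d → c GrpI.w ≠ c GrpI.b →
          ∀ μ f, FullSupp μ → OpenBelief f →
            pairDist μ f (Γ.muRE c) (Γ.fRE c) ≤ ε →
            ∀ dh ∈ Γ.Smax (fun μ' f' => EOset μ' f') μ f,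
              ∃ d' ∈ Γ.Smax (fun μ' f' => EOset μ' f') (Γ.muRE c) (Γ.fRE c),
                polDist dh d' ≤ δ) ∧
        (∀ c d, Γ.IsCtrlEpsEq (fun μ' f' => EOset μ' f') ε c d →
          ∃ c' d', Γ.IsControlledEq (fun μ' f' => EOset μ' f') c' d' ∧
            profDist c d c' d' ≤ δ)) := by
  refine ⟨fun μ f hμ hf => ⟨⟨1, one_mem_EOset hμ hf⟩, isCompact_EOset μ f⟩,
    upperHemicontinuousOn'_EOset, lowerHemicontinuousOn'_EOset, fun Γ _ δ hδ => ?_⟩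
  obtain ⟨ε, ⟨hsmax, hctrl⟩, hε⟩ := (((Γ.eventually_smax_near_smax_of_isEquilibrium hδ).and
    (Γ.eventually_ctrlEpsEq_near_controlledEq hδ)).and self_mem_nhdsWithin).exists
  exact ⟨ε, hε, hsmax, hctrl⟩
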